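/- Let n be a positive integer and let p be a real polynomial of degree at most n satisfying p(1) = 1. Then max_{x ∈ [-1,1]} (1-x)·p(x)² ≥ 2/(2n+1)². -/

import Mathlib

/-!
The substitution `x = 1 - 2 s²` (that is, `x = cos θ`, `s = sin (θ / 2)`) turns `(1 - x) p(x)²`
into `2 q(s)²`, where `q(s) = s p(1 - 2 s²)` has degree at most `2n + 1`, `q(0) = 0` and
`q'(0) = p(1) = 1`. So it suffices to show Bernstein's inequality at the origin,
`q'(0) ≤ (2n + 1) max_{[-1,1]} |q|`. If it failed, then for `c = q'(0) / (2n + 1)` the polynomial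
`h = c T_{2n+1} - (-1)ⁿ q` would vanish to second order at `0` and alternate in sign at the
`2n + 2` Chebyshev nodes `cos (jπ / (2n + 1))`. Then so would `h / X²`, which would need `2n + 1`
roots despite having degree at most `2n - 1`.
-/
open Polynomial

theorem exists_mem_Ioo_eq_zero_of_mul_neg {f : ℝ → ℝ} {a b : ℝ} (hab : a ≤ b)
    (hf : ContinuousOn f (Set.Icc a b)) (h : f a * f b < 0) : ∃ z ∈ Set.Ioo a b, f z = 0 := by
  rcases mul_neg_iff.1 h with ⟨ha, hb⟩ | ⟨ha, hb⟩
  · exact intermediate_value_Ioo' hab hf ⟨hb, ha⟩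
  · exact intermediate_value_Ioo hab hf ⟨ha, hb⟩

namespace Polynomial

theorem le_natDegree_of_alternating {f : ℝ[X]} {a : ℕ → ℝ} {k : ℕ}
    (ha : ∀ i < k, a (i + 1) < a i) (hf : ∀ i ≤ k, 0 < (-1) ^ i * f.eval (a i)) :
    k ≤ f.natDegree := by
  have hsign : ∀ i < k, f.eval (a (i + 1)) * f.eval (a i) < 0 := fun i hi => by
    have h₀ := hf i hi.le
    have h₁ := hf (i + 1) hi
    rw [pow_succ] at h₁
    nlinarith [show ((-1 : ℝ) ^ i) ^ 2 = 1 by simp [← pow_mul]]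
  choose! z hz hroot using fun i (hi : i < k) =>
    exists_mem_Ioo_eq_zero_of_mul_neg (ha i hi).le f.continuous.continuousOn (hsign i hi)
  have hanti : StrictAntiOn a (Set.Iic k) := strictAntiOn_Iic_of_succ_lt ha
  have hz_anti : StrictAntiOn z (Set.Iio k) := fun i hi j hj hij =>
    calc z j < a j := (hz j hj).2
      _ ≤ a (i + 1) := hanti.antitoneOn (Set.mem_Iic.2 hi) (Set.mem_Iic.2 hj.le) hij
      _ < z i := (hz i hi).1
  have hcard := card_le_degree_of_subset_roots (p := f) (Z := (Finset.range k).image z) <| by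
    intro x (hx : x ∈ (Finset.range k).image z)
    obtain ⟨i, hi, rfl⟩ := Finset.mem_image.1 hx
    have hi := Finset.mem_range.1 hi
    refine (mem_roots ?_).2 (hroot i hi)
    rintro rfl
    simpa using hf i hi.le
  rwa [Finset.card_image_of_injOn (by simpa using hz_anti.injOn), Finset.card_range] at hcard

theorem X_sq_dvd_of_eval_zero_of_derivative_eval_zero {R : Type*} [CommSemiring R] {p : R[X]}
    (h₀ : p.eval 0 = 0) (h₁ : (derivative p).eval 0 = 0) : X ^ 2 ∣ p := by
  rw [X_pow_dvd_iff]
  intro d hd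
  interval_cases d
  · rwa [coeff_zero_eq_eval_zero]
  · rw [← coeff_zero_eq_eval_zero, coeff_derivative] at h₁
    simpa using h₁

namespace Chebyshev

theorem T_derivative_eval_zero_two_mul_add_one {R : Type*} [CommRing R] (n : ℕ) :
    (derivative (T R ↑(2 * n + 1))).eval 0 = (2 * n + 1) * (-1) ^ n := by
  rw [Nat.cast_add_one, Nat.cast_mul, Nat.cast_two, T_derivative_eq_U, eval_mul,
    add_sub_cancel_right, U_eval_two_mul_zero]
  simp [Int.negOnePow_def]

theorem neg_one_pow_mul_eval_node_C_mul_T_sub_pos {m j : ℕ} (hj : j ≤ m) {q : ℝ[X]} {c : ℝ}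
    (hq : ∀ x ∈ Set.Icc (-1 : ℝ) 1, |q.eval x| < c) :
    0 < (-1) ^ j * (Polynomial.C c * T ℝ m - q).eval (node m j) := by
  have hq' : (-1) ^ j * q.eval (node m j) < c :=
    (le_abs_self _).trans_lt (by simpa [abs_mul] using hq _ node_mem_Icc)
  rw [eval_sub, eval_mul, eval_C, eval_T_real_node (Finset.mem_Iic.2 hj), mul_sub,
    mul_left_comm, ← mul_pow, neg_one_mul, neg_neg, one_pow, mul_one]
  linarith

end Chebyshev

open Polynomial.Chebyshev in
theorem derivative_eval_zero_le_of_abs_le {n : ℕ} {q : ℝ[X]} {M : ℝ}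
    (hdeg : q.natDegree ≤ 2 * n + 1) (hq0 : q.eval 0 = 0)
    (hM : ∀ x ∈ Set.Icc (-1 : ℝ) 1, |q.eval x| ≤ M) :
    (derivative q).eval 0 ≤ (2 * n + 1) * M := by
  by_contra! hlt
  set c := (derivative q).eval 0 / (2 * n + 1)
  set ε : ℝ := (-1) ^ n
  have hc : ∀ x ∈ Set.Icc (-1 : ℝ) 1, |(C ε * q).eval x| < c := fun x hx => by
    rw [eval_mul, eval_C, abs_mul, abs_neg_one_pow, one_mul, lt_div_iff₀ (by positivity),
      mul_comm]
    exact (mul_le_mul_of_nonneg_left (hM x hx) (by positivity)).trans_lt hlt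
  obtain ⟨g, hg⟩ : X ^ 2 ∣ C c * T ℝ ↑(2 * n + 1) - C ε * q := by
    refine X_sq_dvd_of_eval_zero_of_derivative_eval_zero ?_ ?_
    · simp [hq0]
    · simp only [derivative_sub, derivative_C_mul, eval_sub, eval_mul, eval_C,
        T_derivative_eval_zero_two_mul_add_one]
      rw [← mul_assoc, div_mul_cancel₀ _ (by positivity)]
      ring
  have hg_alt : ∀ j ≤ 2 * n + 1, 0 < (-1) ^ j * g.eval (node (2 * n + 1) j) := fun j hj => by
    have := neg_one_pow_mul_eval_node_C_mul_T_sub_pos hj hc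
    rw [hg, eval_mul, eval_pow, eval_X, mul_left_comm] at this
    exact pos_of_mul_pos_right this (sq_nonneg _)
  have hg_deg := le_natDegree_of_alternating (fun j hj => node_lt hj (Nat.lt_succ_self j)) hg_alt
  have hg0 : g ≠ 0 := by rintro rfl; simp at hg_deg
  have hh_le : (C c * T ℝ ↑(2 * n + 1) - C ε * q).natDegree ≤ 2 * n + 1 :=
    (natDegree_sub_le _ _).trans <| max_le
      ((natDegree_C_mul_le _ _).trans (by rw [natDegree_T, Int.natAbs_natCast]))
      ((natDegree_C_mul_le _ _).trans hdeg)
  rw [hg, natDegree_mul (pow_ne_zero _ X_ne_zero) hg0, natDegree_X_pow] at hh_le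
  omega

noncomputable def halfAngleSubst {R : Type*} [CommRing R] (p : R[X]) : R[X] :=
  X * p.comp (1 - 2 * X ^ 2)

section halfAngleSubst

variable {R : Type*} [CommRing R] (p : R[X])

@[simp]
theorem eval_halfAngleSubst (s : R) :
    (halfAngleSubst p).eval s = s * p.eval (1 - 2 * s ^ 2) := by
  simp [halfAngleSubst, eval_comp]

theorem natDegree_halfAngleSubst_le : (halfAngleSubst p).natDegree ≤ 2 * p.natDegree + 1 := by
  have h : (1 - 2 * X ^ 2 : R[X]).natDegree ≤ 2 :=
    (natDegree_sub_le _ _).trans <| max_le (by simp)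
      (natDegree_mul_le.trans (by simp [natDegree_X_pow_le]))
  refine natDegree_mul_le.trans ?_
  have hcomp := natDegree_comp_le.trans (Nat.mul_le_mul_left p.natDegree h)
  have hX := natDegree_X_le (R := R)
  omega

theorem derivative_halfAngleSubst_eval_zero :
    (derivative (halfAngleSubst p)).eval 0 = p.eval 1 := by
  simp [halfAngleSubst, derivative_mul, eval_comp]

end halfAngleSubst

end Polynomial

theorem dirichlet_square_lower_bound
    (n : ℕ) (p : Polynomial ℝ)
    (hdeg : p.natDegree ≤ n)
    (hone : p.eval 1 = 1) :
    (2 : ℝ) / (2 * (n : ℝ) + 1) ^ 2 ≤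
      sSup ((fun x : ℝ => (1 - x) * p.eval x ^ 2) '' Set.Icc (-1 : ℝ) 1) := by
  set S := sSup ((fun x : ℝ => (1 - x) * p.eval x ^ 2) '' Set.Icc (-1 : ℝ) 1)
  have hbdd : BddAbove ((fun x : ℝ => (1 - x) * p.eval x ^ 2) '' Set.Icc (-1 : ℝ) 1) :=
    (isCompact_Icc.image (by fun_prop)).bddAbove
  have hq : ∀ s ∈ Set.Icc (-1 : ℝ) 1, |(halfAngleSubst p).eval s| ≤ √(S / 2) := by
    intro s hs
    have hs2 : s ^ 2 ≤ 1 := sq_le_one_iff_abs_le_one s |>.2 (abs_le.2 hs)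
    have hx : 1 - 2 * s ^ 2 ∈ Set.Icc (-1 : ℝ) 1 := ⟨by linarith, by linarith [sq_nonneg s]⟩
    have hS := le_csSup hbdd ⟨_, hx, rfl⟩
    refine Real.abs_le_sqrt ?_
    rw [eval_halfAngleSubst]
    linarith
  have key := derivative_eval_zero_le_of_abs_le (n := n)
    ((natDegree_halfAngleSubst_le p).trans (by omega)) (by simp) hq
  rw [derivative_halfAngleSubst_eval_zero, hone, ← div_le_iff₀' (by positivity),
    Real.le_sqrt' (by positivity), div_pow, one_pow] at key
  calc (2 : ℝ) / (2 * n + 1) ^ 2 = 2 * (1 / (2 * n + 1) ^ 2) := by ring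
    _ ≤ S := by linarith
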